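/- Let X be a set, G and H real Hilbert spaces, φ : X → G a map, Y a compact metric space, and ψ : Y → H a continuous map such that the set {y ↦ ⟨h, ψ(y)⟩_H : h ∈ H} is dense in C(Y, ℝ) with respect to the supremum norm. Let P and Q assign to each x ∈ X a Borel probability measure P(·|x) and Q(·|x) on Y. Suppose there exist continuous linear operators C_P : G → H and C_Q : G → H such that for every x ∈ X, C_P(φ(x)) = ∫ ψ(y) dP(y|x) and C_Q(φ(x)) = ∫ ψ(y) dQ(y|x) (Bochner integrals, the conditional mean embeddings). If C_P = C_Q, then for every x ∈ X, P(·|x) = Q(·|x). -/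

import Mathlib

/-!
The hypothesis `C_P = C_Q` says that `P(·|x)` and `Q(·|x)` have the same kernel mean embedding.
Pairing with `h ∈ H` and pulling the inner product through the Bochner integral, the two
measures integrate every function `y ↦ ⟪h, ψ y⟫` alike. Integration against a finite measure
is continuous in the supremum norm, so by universality they integrate every continuous
function alike, and finite Borel measures on a metric space are determined by these integrals.
-/

open MeasureTheory
open scoped BoundedContinuousFunction

theorem BoundedContinuousFunction.lipschitzWith_integral {X : Type*} [TopologicalSpace X]
    [MeasurableSpace X] [OpensMeasurableSpace X] (μ : Measure X) [IsFiniteMeasure μ] :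
    LipschitzWith ⟨μ.real Set.univ, measureReal_nonneg⟩ fun f : X →ᵇ ℝ => ∫ x, f x ∂μ := by
  refine LipschitzWith.of_dist_le_mul fun f g => ?_
  rw [dist_eq_norm, dist_eq_norm, ← integral_sub (f.integrable μ) (g.integrable μ)]
  exact (f - g).norm_integral_le_mul_norm μ

theorem ContinuousMap.continuous_integral {X : Type*} [TopologicalSpace X] [CompactSpace X]
    [MeasurableSpace X] [OpensMeasurableSpace X] (μ : Measure X) [IsFiniteMeasure μ] :
    Continuous fun f : C(X, ℝ) => ∫ x, f x ∂μ :=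
  (BoundedContinuousFunction.lipschitzWith_integral μ).continuous.comp
    (ContinuousMap.isometryEquivBoundedOfCompact X ℝ).continuous

theorem MeasureTheory.ext_of_denseRange_of_forall_integral_eq {Y : Type*} [MetricSpace Y]
    [CompactSpace Y] [MeasurableSpace Y] [BorelSpace Y] {μ ν : Measure Y} [IsFiniteMeasure μ]
    [IsFiniteMeasure ν] {ι : Type*} {F : ι → C(Y, ℝ)} (hF : DenseRange F)
    (h : ∀ i, ∫ y, F i y ∂μ = ∫ y, F i y ∂ν) : μ = ν := by
  have hcont : ∀ f : C(Y, ℝ), ∫ y, f y ∂μ = ∫ y, f y ∂ν := fun f =>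
    hF.induction_on f (isClosed_eq (ContinuousMap.continuous_integral μ)
      (ContinuousMap.continuous_integral ν)) h
  exact ext_of_forall_integral_eq_of_IsFiniteMeasure fun f => hcont f.toContinuousMap

theorem condDist_eq_of_condEmbedding_eq_general
    {X : Type*} {G : Type*} [NormedAddCommGroup G] [InnerProductSpace ℝ G]
    {H : Type*} [NormedAddCommGroup H] [InnerProductSpace ℝ H] [CompleteSpace H]
    (φ : X → G)
    {Y : Type*} [MetricSpace Y] [CompactSpace Y] [MeasurableSpace Y] [BorelSpace Y]
    (ψ : Y → H) (hψ : Continuous ψ)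
    (huniv : DenseRange (fun h : H =>
      (⟨fun y => (inner ℝ h (ψ y) : ℝ), continuous_const.inner hψ⟩ : C(Y, ℝ))))
    (P Q : X → Measure Y)
    (hP : ∀ x, IsProbabilityMeasure (P x)) (hQ : ∀ x, IsProbabilityMeasure (Q x))
    (CP CQ : G →L[ℝ] H)
    (hCP : ∀ x, CP (φ x) = ∫ y, ψ y ∂(P x))
    (hCQ : ∀ x, CQ (φ x) = ∫ y, ψ y ∂(Q x))
    (hEq : CP = CQ) :
    ∀ x, P x = Q x := by
  intro x
  have := hP x
  have := hQ x
  have hmean : ∫ y, ψ y ∂(P x) = ∫ y, ψ y ∂(Q x) := by rw [← hCP, ← hCQ, hEq]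
  have hψint : ∀ (μ : Measure Y) [IsFiniteMeasure μ], Integrable ψ μ := fun _ _ =>
    hψ.integrable_of_hasCompactSupport (.of_compactSpace ψ)
  refine ext_of_denseRange_of_forall_integral_eq huniv fun h => ?_
  change ∫ y, inner ℝ h (ψ y) ∂(P x) = ∫ y, inner ℝ h (ψ y) ∂(Q x)
  rw [integral_inner (hψint _) h, integral_inner (hψint _) h, hmean]

/-- Equality of conditional embedding operators implies equality of the conditional
distributions, when the kernel on the output space `Y` is universal. -/
theorem condDist_eq_of_condEmbedding_eq
    {X : Type*} {G : Type*} [NormedAddCommGroup G] [InnerProductSpace ℝ G] [CompleteSpace G]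
    {H : Type*} [NormedAddCommGroup H] [InnerProductSpace ℝ H] [CompleteSpace H]
    (φ : X → G)
    {Y : Type*} [MetricSpace Y] [CompactSpace Y] [MeasurableSpace Y] [BorelSpace Y]
    (ψ : Y → H) (hψ : Continuous ψ)
    (huniv : DenseRange (fun h : H =>
      (⟨fun y => (inner ℝ h (ψ y) : ℝ), continuous_const.inner hψ⟩ : C(Y, ℝ))))
    (P Q : X → Measure Y)
    (hP : ∀ x, IsProbabilityMeasure (P x)) (hQ : ∀ x, IsProbabilityMeasure (Q x))
    (CP CQ : G →L[ℝ] H)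
    (hCP : ∀ x, CP (φ x) = ∫ y, ψ y ∂(P x))
    (hCQ : ∀ x, CQ (φ x) = ∫ y, ψ y ∂(Q x))
    (hEq : CP = CQ) :
    ∀ x, P x = Q x :=
  condDist_eq_of_condEmbedding_eq_general φ ψ hψ huniv P Q hP hQ CP CQ hCP hCQ hEq
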